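/- arXiv:2410.06571 — 8 statements merged into one kernel-verified Lean document; each statement's English description precedes it below -/
import Mathlib

section
/- For positive integers p, q, r, let e = lcm(gcd(p,q), gcd(q,r), gcd(p,r)) and f = gcd(p, q, r). Then e * f = p * q * r / lcm(p, q, r). -/
theorem stmt_0 (p q r : ℕ) (hp : 0 < p) (hq : 0 < q) (hr : 0 < r) :
    Nat.lcm (Nat.gcd p q) (Nat.lcm (Nat.gcd q r) (Nat.gcd p r)) * Nat.gcd p (Nat.gcd q r)
      = p * q * r / Nat.lcm p (Nat.lcm q r) := by
  have hp' := hp.ne'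
  have hq' := hq.ne'
  have hr' := hr.ne'
  have h1 : Nat.gcd p q ≠ 0 := (Nat.gcd_pos_of_pos_left q hp).ne'
  have h2 : Nat.gcd q r ≠ 0 := (Nat.gcd_pos_of_pos_left r hq).ne'
  have h3 : Nat.gcd p r ≠ 0 := (Nat.gcd_pos_of_pos_left r hp).ne'
  have h7 : Nat.lcm q r ≠ 0 := Nat.lcm_ne_zero hq' hr'
  have hL : Nat.lcm p (Nat.lcm q r) ≠ 0 := Nat.lcm_ne_zero hp' h7
  have h4 : Nat.lcm (Nat.gcd q r) (Nat.gcd p r) ≠ 0 := Nat.lcm_ne_zero h2 h3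
  have h5 : Nat.lcm (Nat.gcd p q) (Nat.lcm (Nat.gcd q r) (Nat.gcd p r)) ≠ 0 :=
    Nat.lcm_ne_zero h1 h4
  have h6 : Nat.gcd p (Nat.gcd q r) ≠ 0 := (Nat.gcd_pos_of_pos_left _ hp).ne'
  have key : Nat.lcm (Nat.gcd p q) (Nat.lcm (Nat.gcd q r) (Nat.gcd p r)) * Nat.gcd p (Nat.gcd q r)
      * Nat.lcm p (Nat.lcm q r) = p * q * r := by
    refine Nat.eq_of_factorization_eq (by simp [h5, h6, hL]) (by simp [hp', hq', hr']) fun n => ?_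
    rw [Nat.factorization_mul (Nat.mul_ne_zero h5 h6) hL, Nat.factorization_mul h5 h6,
      Nat.factorization_mul (Nat.mul_ne_zero hp' hq') hr', Nat.factorization_mul hp' hq',
      Nat.factorization_lcm h1 h4, Nat.factorization_lcm h2 h3,
      Nat.factorization_gcd hp' hq', Nat.factorization_gcd hq' hr',
      Nat.factorization_gcd hp' hr', Nat.factorization_gcd hp' h2,
      Nat.factorization_lcm hp' h7, Nat.factorization_lcm hq' hr',
      Nat.factorization_gcd hq' hr']
    simp only [Finsupp.add_apply, Finsupp.sup_apply, Finsupp.inf_apply]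
    omega
  exact (Nat.div_eq_of_eq_mul_left (Nat.pos_of_ne_zero hL) key.symm).symm
end

section
/- Let p, q, r be positive integers, and let e1 = gcd(p, lcm(q,r)), m1 = p / e1, e2 = gcd(q, lcm(p,r)), m2 = q / e2, e3 = gcd(r, lcm(p,q)), m3 = r / e3. Then m1, m2, m3 are pairwise coprime. -/
lemma key_4 (a b c k : ℕ) (ha : 0 < a) (hb : 0 < b) (hc : 0 < c)
    (hkp : k.Prime) (hdvd : k ∣ a / Nat.gcd a (Nat.lcm b c)) :
    max (b.factorization k) (c.factorization k) < a.factorization k := by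
  set e := Nat.gcd a (Nat.lcm b c) with he_def
  have he : e ∣ a := Nat.gcd_dvd_left _ _
  have hepos : 0 < e := Nat.gcd_pos_of_pos_left _ ha
  have hdivpos : 0 < a / e := Nat.div_pos (Nat.le_of_dvd ha he) hepos
  have hpos : 0 < (a / e).factorization k :=
    hkp.factorization_pos_of_dvd hdivpos.ne' hdvd
  have hfd : (a / e).factorization = a.factorization - e.factorization :=
    Nat.factorization_div he
  have hge : e.factorization k =
      min (a.factorization k) (max (b.factorization k) (c.factorization k)) := by
    rw [he_def, Nat.factorization_gcd ha.ne' (Nat.lcm_ne_zero hb.ne' hc.ne'),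
      Nat.factorization_lcm hb.ne' hc.ne']
    simp [Finsupp.inf_apply, Finsupp.sup_apply]
  rw [hfd] at hpos
  simp only [Finsupp.tsub_apply] at hpos
  omega

lemma aux_4 (a b c : ℕ) (ha : 0 < a) (hb : 0 < b) (hc : 0 < c) :
    Nat.Coprime (a / Nat.gcd a (Nat.lcm b c)) (b / Nat.gcd b (Nat.lcm a c)) := by
  by_contra h
  obtain ⟨k, hkp, hkd⟩ := Nat.exists_prime_and_dvd h
  have h1 := key_4 a b c k ha hb hc hkp (hkd.trans (Nat.gcd_dvd_left _ _))
  have h2 := key_4 b a c k hb ha hc hkp (hkd.trans (Nat.gcd_dvd_right _ _))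
  omega

theorem stmt_4 (p q r : ℕ) (hp : 0 < p) (hq : 0 < q) (hr : 0 < r) :
    Nat.Coprime (p / Nat.gcd p (Nat.lcm q r)) (q / Nat.gcd q (Nat.lcm p r)) ∧
    Nat.Coprime (q / Nat.gcd q (Nat.lcm p r)) (r / Nat.gcd r (Nat.lcm p q)) ∧
    Nat.Coprime (p / Nat.gcd p (Nat.lcm q r)) (r / Nat.gcd r (Nat.lcm p q)) := by
  refine ⟨aux_4 p q r hp hq hr, ?_, ?_⟩
  · have := aux_4 q r p hq hr hp
    rwa [Nat.lcm_comm r p, Nat.lcm_comm q p] at this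
  · have := aux_4 p r q hp hr hq
    rwa [Nat.lcm_comm r q] at this
end

section
/- Let p, q, r be positive integers with e1 = gcd(p, lcm(q,r)), e2 = gcd(q, lcm(p,r)), e3 = gcd(r, lcm(p,q)). If a prime k divides p/e1, then k does not divide q/e2 (a fortiori gcd(p/e1, q/e2) = 1). -/
theorem stmt_5 (p q r k : ℕ) (hp : 0 < p) (hq : 0 < q) (hr : 0 < r) (hk : k.Prime)
    (hdvd : k ∣ p / Nat.gcd p (Nat.lcm q r)) :
    ¬ k ∣ q / Nat.gcd q (Nat.lcm p r) := by
  intro hdvd2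
  have hqr : Nat.lcm q r ≠ 0 := Nat.lcm_ne_zero hq.ne' hr.ne'
  have hpr : Nat.lcm p r ≠ 0 := Nat.lcm_ne_zero hp.ne' hr.ne'
  have hg1 : Nat.gcd p (Nat.lcm q r) ≠ 0 := Nat.gcd_ne_zero_left hp.ne'
  have hg2 : Nat.gcd q (Nat.lcm p r) ≠ 0 := Nat.gcd_ne_zero_left hq.ne'
  have hd1 : p / Nat.gcd p (Nat.lcm q r) ≠ 0 :=
    (Nat.div_pos (Nat.le_of_dvd hp (Nat.gcd_dvd_left _ _)) (Nat.pos_of_ne_zero hg1)).ne'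
  have hd2 : q / Nat.gcd q (Nat.lcm p r) ≠ 0 :=
    (Nat.div_pos (Nat.le_of_dvd hq (Nat.gcd_dvd_left _ _)) (Nat.pos_of_ne_zero hg2)).ne'
  have h1 := (Nat.Prime.dvd_iff_one_le_factorization hk hd1).mp hdvd
  have h2 := (Nat.Prime.dvd_iff_one_le_factorization hk hd2).mp hdvd2
  have e1 : (p / Nat.gcd p (Nat.lcm q r)).factorization k =
      p.factorization k - min (p.factorization k) (max (q.factorization k) (r.factorization k)) := by
    rw [Nat.factorization_div (Nat.gcd_dvd_left _ _)]
    simp [Nat.factorization_gcd hp.ne' hqr, Nat.factorization_lcm hq.ne' hr.ne']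
  have e2 : (q / Nat.gcd q (Nat.lcm p r)).factorization k =
      q.factorization k - min (q.factorization k) (max (p.factorization k) (r.factorization k)) := by
    rw [Nat.factorization_div (Nat.gcd_dvd_left _ _)]
    simp [Nat.factorization_gcd hq.ne' hpr, Nat.factorization_lcm hp.ne' hr.ne']
  rw [e1] at h1
  rw [e2] at h2
  omega
end

section
/- Let p, q, r be positive integers. In the abelian group A = ℤ²/⟨(p,0),(0,q),(r,r)⟩, the image of the generator (1,0) has order gcd(p, lcm(q,r)). -/
/-!
Writing H for the subgroup, `n • (1, 0) ∈ H` means `(n, 0) = i (p, 0) + j (0, q) + k (r, r)`.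
The second coordinate says that `k r` is a common multiple of `q` and `r`, i.e. any multiple of
`lcm q r`, so the first says that `n ∈ pℤ + lcm(q, r)ℤ = gcd(p, lcm(q, r))ℤ`.
-/

theorem AddSubgroup.mem_closure_triple {G : Type*} [AddCommGroup G] {a b c x : G} :
    x ∈ closure ({a, b, c} : Set G) ↔ ∃ i j k : ℤ, i • a + j • b + k • c = x := by
  rw [← Set.singleton_union, closure_union, mem_sup]
  simp_rw [mem_closure_singleton, mem_closure_pair, exists_exists_eq_and]
  constructor
  · rintro ⟨i, _, ⟨j, k, rfl⟩, rfl⟩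
    exact ⟨i, j, k, add_assoc _ _ _⟩
  · rintro ⟨i, j, k, rfl⟩
    exact ⟨i, _, ⟨j, k, rfl⟩, (add_assoc _ _ _).symm⟩

theorem exists_mul_add_mul_iff_gcd_lcm_dvd {R : Type*} [CommRing R] [IsDomain R] [IsBezout R]
    [GCDMonoid R] (a b c n : R) :
    (∃ i j k : R, i * a + k * c = n ∧ j * b + k * c = 0) ↔ gcd a (lcm b c) ∣ n := by
  rw [gcd_dvd_iff_exists]
  constructor
  · rintro ⟨i, j, k, rfl, hjk⟩
    obtain ⟨m, hm⟩ : lcm b c ∣ k * c :=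
      lcm_dvd ⟨-j, by linear_combination hjk⟩ (dvd_mul_left c k)
    exact ⟨i, m, by rw [← hm]; ring⟩
  · rintro ⟨u, v, rfl⟩
    obtain ⟨s, hs⟩ := dvd_lcm_left b c
    obtain ⟨t, ht⟩ := dvd_lcm_right b c
    exact ⟨u, -(s * v), t * v, by linear_combination -(v * ht),
      by linear_combination v * hs - v * ht⟩

theorem addOrderOf_eq_of_forall_zsmul_eq_zero_iff {G : Type*} [AddGroup G] {x : G} {d : ℕ}
    (h : ∀ n : ℤ, n • x = 0 ↔ (d : ℤ) ∣ n) : addOrderOf x = d := by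
  apply Nat.dvd_antisymm
  · exact Int.natCast_dvd_natCast.mp (addOrderOf_dvd_iff_zsmul_eq_zero.mpr ((h d).mpr dvd_rfl))
  · exact Int.natCast_dvd_natCast.mp ((h _).mp (addOrderOf_dvd_iff_zsmul_eq_zero.mp dvd_rfl))

theorem Int.prod_mk_zero_mem_closure_iff (a b c n : ℤ) :
    (n, 0) ∈ AddSubgroup.closure {(a, 0), (0, b), (c, c)} ↔
      ∃ i j k : ℤ, i * a + k * c = n ∧ j * b + k * c = 0 := by
  simp [AddSubgroup.mem_closure_triple, Prod.ext_iff, mul_comm]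

theorem stmt_8_general (p q r : ℕ) :
    addOrderOf (QuotientAddGroup.mk ((1 : ℤ), (0 : ℤ)) :
        (ℤ × ℤ) ⧸ AddSubgroup.closure
          {((p : ℤ), (0 : ℤ)), ((0 : ℤ), (q : ℤ)), ((r : ℤ), (r : ℤ))}) =
      Nat.gcd p (Nat.lcm q r) := by
  refine addOrderOf_eq_of_forall_zsmul_eq_zero_iff fun n => ?_
  rw [← QuotientAddGroup.mk_zsmul, QuotientAddGroup.eq_zero_iff, Prod.smul_mk, smul_zero,
    smul_eq_mul, mul_one, Int.prod_mk_zero_mem_closure_iff, exists_mul_add_mul_iff_gcd_lcm_dvd]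
  simp [← Int.coe_gcd, ← Int.coe_lcm]

theorem stmt_8 (p q r : ℕ) (hp : 0 < p) (hq : 0 < q) (hr : 0 < r) :
    addOrderOf (QuotientAddGroup.mk ((1 : ℤ), (0 : ℤ)) :
        (ℤ × ℤ) ⧸ AddSubgroup.closure
          {((p : ℤ), (0 : ℤ)), ((0 : ℤ), (q : ℤ)), ((r : ℤ), (r : ℤ))}) =
      Nat.gcd p (Nat.lcm q r) :=
  stmt_8_general p q r
end

section
/- Let p, q, r be positive integers. The abelian group ℤ²/⟨(p,0),(0,q),(r,r)⟩ is isomorphic to C_e × C_f where e = lcm(gcd(p,q), gcd(q,r), gcd(p,r)) and f = gcd(p,q,r). -/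
/-!
By the Smith normal form a finite quotient of `ℤ²` is `ZMod a × ZMod b`, and
`ZMod a × ZMod b ≃+ ZMod (lcm a b) × ZMod (gcd a b)`, so such a quotient is determined by its
exponent and its order. For `N = ⟨(p,0), (0,q), (r,r)⟩` the exponent is the lcm of the orders
of `(1,0)` and `(0,1)`, namely `lcm (gcd p (lcm q r)) (gcd q (lcm p r))`, and, since
`ℤ² ⧸ N ≃+ (ZMod p × ZMod q) ⧸ ⟨(r,r)⟩`, the order is `p q` divided by the order of `(r,r)`.
Comparing `ℓ`-adic valuations identifies these two numbers with `e` and `e f`.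
-/

theorem Nat.lcm_gcd_lcm_gcd_lcm {p q r : ℕ} (hp : p ≠ 0) (hq : q ≠ 0) (hr : r ≠ 0) :
    (p.gcd (q.lcm r)).lcm (q.gcd (p.lcm r)) = (p.gcd q).lcm ((q.gcd r).lcm (p.gcd r)) := by
  refine Nat.eq_of_factorization_eq (by simp [*]) (by simp [*]) fun ℓ => ?_
  simp only [ne_eq, Nat.gcd_eq_zero_iff, Nat.lcm_eq_zero_iff, or_self, and_self, not_false_eq_true,
    Nat.factorization_lcm, Nat.factorization_gcd, Finsupp.sup_apply, Finsupp.inf_apply, hp, hq, hr]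
  omega

theorem Nat.lcm_gcd_mul_gcd_mul_lcm_div_gcd {p q r : ℕ} (hp : p ≠ 0) (hq : q ≠ 0) (hr : r ≠ 0) :
    (p.gcd q).lcm ((q.gcd r).lcm (p.gcd r)) * p.gcd (q.gcd r) * (p / p.gcd r).lcm (q / q.gcd r) =
      p * q := by
  have hpr : p / p.gcd r ≠ 0 := by
    simpa [Nat.div_eq_zero_iff, hp] using Nat.gcd_le_left r (Nat.pos_of_ne_zero hp)
  have hqr : q / q.gcd r ≠ 0 := by
    simpa [Nat.div_eq_zero_iff, hq] using Nat.gcd_le_left r (Nat.pos_of_ne_zero hq)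
  refine Nat.eq_of_factorization_eq (by simp [*]) (by simp [*]) fun ℓ => ?_
  simp only [ne_eq, mul_eq_zero, Nat.lcm_eq_zero_iff, Nat.gcd_eq_zero_iff, and_self, or_self,
    not_false_eq_true, Nat.factorization_mul, Nat.factorization_lcm, Nat.factorization_gcd,
    Nat.factorization_div (Nat.gcd_dvd_left _ _), Finsupp.coe_add, Pi.add_apply, Finsupp.sup_apply,
    Finsupp.inf_apply, Finsupp.coe_tsub, Pi.sub_apply, hp, hq, hr, hpr, hqr]
  omega

theorem ZMod.nonempty_lcm_prod_gcd_addEquiv {m n : ℕ} (hm : m ≠ 0) (hn : n ≠ 0) :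
    Nonempty (ZMod (m.lcm n) × ZMod (m.gcd n) ≃+ ZMod m × ZMod n) := by
  have : NeZero (m.lcm n) := ⟨Nat.lcm_ne_zero hm hn⟩
  have : NeZero (m.gcd n) := ⟨Nat.gcd_ne_zero_left hm⟩
  obtain ⟨m', n', hcop, hm', hn'⟩ := Nat.exists_coprime m n
  set u := m'.gcdA n'
  set v := m'.gcdB n'
  have hbezout : (m' : ℤ) * u + n' * v = 1 := by
    rw [← Nat.gcd_eq_gcd_ab, hcop, Nat.cast_one]
  have hg_smul : (m.gcd n : ℤ) • ((-(m' * u) : ZMod m), (n' * v : ZMod n)) = 0 := by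
    have hm0 : (m' * m.gcd n : ZMod m) = 0 := by rw [← Nat.cast_mul, ← hm', ZMod.natCast_self]
    have hn0 : (n' * m.gcd n : ZMod n) = 0 := by rw [← Nat.cast_mul, ← hn', ZMod.natCast_self]
    simp only [Prod.smul_mk, zsmul_eq_mul, Int.cast_natCast, Prod.mk_eq_zero]
    exact ⟨by linear_combination (-(u : ZMod m)) * hm0, by linear_combination (v : ZMod n) * hn0⟩
  let ψ : ZMod (m.lcm n) × ZMod (m.gcd n) →+ ZMod m × ZMod n :=
    ((ZMod.castHom (Nat.dvd_lcm_left m n) _).toAddMonoidHom.prod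
      (ZMod.castHom (Nat.dvd_lcm_right m n) _).toAddMonoidHom).coprod
      (ZMod.lift _ ⟨zmultiplesHom _ ((-(m' * u) : ZMod m), (n' * v : ZMod n)), hg_smul⟩)
  have hψ (S W : ℤ) :
      ψ (S, W) = (((S - W * m' * u : ℤ) : ZMod m), ((S + W * n' * v : ℤ) : ZMod n)) := by
    simp only [ψ, RingHom.toAddMonoidHom_eq_coe, AddMonoidHom.coprod_apply,
      AddMonoidHom.prod_apply, AddMonoidHom.coe_coe, map_intCast, ZMod.lift_coe,
      zmultiplesHom_apply, Prod.smul_mk, zsmul_eq_mul, Prod.mk_add_mk, Int.cast_sub, Int.cast_mul,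
      Int.cast_natCast, Int.cast_add]
    congr 1 <;> ring
  have hsurj : Function.Surjective ψ := by
    rintro ⟨x, y⟩
    obtain ⟨X, rfl⟩ := ZMod.intCast_surjective x
    obtain ⟨Y, rfl⟩ := ZMod.intCast_surjective y
    refine ⟨((X * n' * v + Y * m' * u : ℤ), (Y - X : ℤ)), ?_⟩
    rw [hψ]
    congr 2
    · linear_combination X * hbezout
    · linear_combination Y * hbezout
  refine ⟨AddEquiv.ofBijective ψ (hsurj.bijective_of_nat_card_le ?_)⟩
  simp only [Nat.card_prod, Nat.card_zmod, Nat.lcm_mul_gcd, le_rfl]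

namespace AddSubgroup

theorem exists_quotient_addEquiv_zmod_prod (N : AddSubgroup (ℤ × ℤ))
    [Finite ((ℤ × ℤ) ⧸ N)] :
    ∃ a b : ℕ, a ≠ 0 ∧ b ≠ 0 ∧ Nonempty (((ℤ × ℤ) ⧸ N) ≃+ ZMod a × ZMod b) := by
  let N' := AddSubgroup.toIntSubmodule N
  have hrank : Module.finrank ℤ N' = Module.finrank ℤ (ℤ × ℤ) :=
    (Submodule.finiteQuotient_iff N').mp ‹_›
  let b := Module.Basis.finTwoProd ℤ
  have ha := Submodule.smithNormalFormCoeffs_ne_zero b hrank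
  exact ⟨_, _, Int.natAbs_ne_zero.mpr (ha 0), Int.natAbs_ne_zero.mpr (ha 1),
    ⟨(N'.quotientEquivPiZMod b hrank).trans (LinearEquiv.piFinTwo ℤ _).toAddEquiv⟩⟩

theorem nonempty_quotient_addEquiv_zmod_prod (N : AddSubgroup (ℤ × ℤ))
    [Finite ((ℤ × ℤ) ⧸ N)] {e f : ℕ} (he : AddMonoid.exponent ((ℤ × ℤ) ⧸ N) = e)
    (hcard : Nat.card ((ℤ × ℤ) ⧸ N) = e * f) :
    Nonempty (((ℤ × ℤ) ⧸ N) ≃+ ZMod e × ZMod f) := by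
  obtain ⟨a, b, ha, hb, ⟨E⟩⟩ := N.exists_quotient_addEquiv_zmod_prod
  obtain ⟨F⟩ := ZMod.nonempty_lcm_prod_gcd_addEquiv ha hb
  have hlcm : a.lcm b = e := by
    rw [← he, AddMonoid.exponent_eq_of_addEquiv E, AddMonoid.exponent_prod, ZMod.exponent,
      ZMod.exponent]
    rfl
  have hgcd : a.gcd b = f := by
    refine Nat.eq_of_mul_eq_mul_left (Nat.pos_of_ne_zero (Nat.lcm_ne_zero ha hb)) ?_
    rw [Nat.lcm_mul_gcd, hlcm, ← hcard, Nat.card_congr E.toEquiv, Nat.card_prod, Nat.card_zmod,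
      Nat.card_zmod]
  subst hlcm hgcd
  exact ⟨E.trans F.symm⟩

theorem exponent_quotient_dvd_iff (N : AddSubgroup (ℤ × ℤ)) {n : ℕ} :
    AddMonoid.exponent ((ℤ × ℤ) ⧸ N) ∣ n ↔ ((n : ℤ), (0 : ℤ)) ∈ N ∧ ((0 : ℤ), (n : ℤ)) ∈ N := by
  simp only [AddMonoid.exponent_dvd_iff_forall_nsmul_eq_zero]
  constructor
  · intro h
    have h₁ := h (((1 : ℤ), (0 : ℤ)) : ℤ × ℤ)
    have h₂ := h (((0 : ℤ), (1 : ℤ)) : ℤ × ℤ)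
    rw [← QuotientAddGroup.mk_nsmul, QuotientAddGroup.eq_zero_iff] at h₁ h₂
    simpa using And.intro h₁ h₂
  · rintro ⟨h₁, h₂⟩ z
    induction z using QuotientAddGroup.induction_on with | H z =>
    rw [← QuotientAddGroup.mk_nsmul, QuotientAddGroup.eq_zero_iff]
    have hz : n • z = z.1 • ((n : ℤ), (0 : ℤ)) + z.2 • ((0 : ℤ), (n : ℤ)) := by
      ext <;> simp [mul_comm]
    rw [hz]
    exact add_mem (zsmul_mem h₁ _) (zsmul_mem h₂ _)

end AddSubgroup

def triangleLattice (p q r : ℕ) : AddSubgroup (ℤ × ℤ) :=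
  AddSubgroup.closure {((p : ℤ), (0 : ℤ)), ((0 : ℤ), (q : ℤ)), ((r : ℤ), (r : ℤ))}

def triangleQuotientHom (p q r : ℕ) :
    ℤ × ℤ →+ (ZMod p × ZMod q) ⧸ AddSubgroup.zmultiples ((r : ZMod p), (r : ZMod q)) :=
  (QuotientAddGroup.mk' _).comp ((Int.castAddHom _).prodMap (Int.castAddHom _))

section triangleLattice

variable {p q r : ℕ}

theorem mem_ker_triangleQuotientHom {z : ℤ × ℤ} :
    z ∈ (triangleQuotientHom p q r).ker ↔
      ∃ c : ℤ, (p : ℤ) ∣ z.1 - c * r ∧ (q : ℤ) ∣ z.2 - c * r := by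
  simp only [triangleQuotientHom, AddMonoidHom.mem_ker, AddMonoidHom.coe_comp,
    QuotientAddGroup.coe_mk', AddMonoidHom.coe_prodMap, Int.coe_castAddHom, Function.comp_apply,
    QuotientAddGroup.eq_zero_iff, AddSubgroup.mem_zmultiples_iff, Prod.smul_mk, zsmul_eq_mul,
    Prod.ext_iff, Prod.map_fst, Prod.map_snd]
  simp only [← Int.cast_natCast (R := ZMod _), ← Int.cast_mul, ZMod.intCast_eq_intCast_iff_dvd_sub]

theorem triangleLattice_eq_ker : triangleLattice p q r = (triangleQuotientHom p q r).ker := by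
  refine le_antisymm ((AddSubgroup.closure_le _).mpr ?_) fun z hz => ?_
  · rintro z (rfl | rfl | rfl) <;> rw [SetLike.mem_coe, mem_ker_triangleQuotientHom]
    exacts [⟨0, by simp, by simp⟩, ⟨0, by simp, by simp⟩, ⟨1, by simp, by simp⟩]
  · obtain ⟨c, ⟨a, ha⟩, ⟨b, hb⟩⟩ := mem_ker_triangleQuotientHom.mp hz
    have hz : z = a • ((p : ℤ), (0 : ℤ)) + b • ((0 : ℤ), (q : ℤ)) + c • ((r : ℤ), (r : ℤ)) := by
      ext <;>
        simp only [Prod.fst_add, Prod.snd_add, Prod.smul_mk, Int.zsmul_eq_mul, mul_zero, add_zero,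
          zero_add] <;>
        linarith
    rw [hz]
    refine add_mem (add_mem (zsmul_mem ?_ a) (zsmul_mem ?_ b)) (zsmul_mem ?_ c) <;>
      exact AddSubgroup.subset_closure (by simp)

theorem mem_triangleLattice {z : ℤ × ℤ} :
    z ∈ triangleLattice p q r ↔ ∃ c : ℤ, (p : ℤ) ∣ z.1 - c * r ∧ (q : ℤ) ∣ z.2 - c * r := by
  rw [triangleLattice_eq_ker, mem_ker_triangleQuotientHom]

theorem swap_mem_triangleLattice {z : ℤ × ℤ} :
    z.swap ∈ triangleLattice q p r ↔ z ∈ triangleLattice p q r := by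
  simp only [mem_triangleLattice, Prod.fst_swap, Prod.snd_swap, and_comm]

theorem natCast_mk_zero_mem_triangleLattice {n : ℕ} :
    ((n : ℤ), (0 : ℤ)) ∈ triangleLattice p q r ↔ p.gcd (q.lcm r) ∣ n := by
  rw [mem_triangleLattice]
  constructor
  · rintro ⟨c, hp, hq⟩
    have hL : ((q.lcm r : ℕ) : ℤ) ∣ c * r := by
      rw [← Int.lcm_natCast_natCast, Int.coe_lcm]
      exact lcm_dvd (by simpa using hq) (dvd_mul_left _ _)
    have := dvd_add ((Int.natCast_dvd_natCast.mpr (p.gcd_dvd_left _)).trans hp)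
      ((Int.natCast_dvd_natCast.mpr (p.gcd_dvd_right _)).trans hL)
    exact_mod_cast (sub_add_cancel (n : ℤ) (c * r)) ▸ this
  · intro hn
    obtain ⟨a, b, hab⟩ := (Int.gcd_dvd_iff (a := p) (b := q.lcm r) (n := n)).mp
      (by rwa [Int.gcd_natCast_natCast])
    obtain ⟨t, ht⟩ := Nat.dvd_lcm_right q r
    refine ⟨b * t, ⟨a, ?_⟩, ?_⟩
    · rw [hab, mul_assoc, ← Nat.cast_mul, mul_comm t, ← ht]; ring
    · rw [zero_sub, dvd_neg, mul_assoc, ← Nat.cast_mul, mul_comm t, ← ht]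
      exact (Int.natCast_dvd_natCast.mpr (Nat.dvd_lcm_left q r)).mul_left b

theorem exponent_quotient_triangleLattice (hp : p ≠ 0) (hq : q ≠ 0) (hr : r ≠ 0) :
    AddMonoid.exponent ((ℤ × ℤ) ⧸ triangleLattice p q r) =
      (p.gcd q).lcm ((q.gcd r).lcm (p.gcd r)) := by
  rw [← Nat.lcm_gcd_lcm_gcd_lcm hp hq hr]
  refine Nat.dvd_right_iff_eq.mp fun n => ?_
  rw [AddSubgroup.exponent_quotient_dvd_iff, ← swap_mem_triangleLattice (z := ((0 : ℤ), _)),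
    Prod.swap_prod_mk, natCast_mk_zero_mem_triangleLattice, natCast_mk_zero_mem_triangleLattice,
    Nat.lcm_dvd_iff]

theorem card_quotient_triangleLattice (hp : p ≠ 0) (hq : q ≠ 0) (hr : r ≠ 0) :
    Nat.card ((ℤ × ℤ) ⧸ triangleLattice p q r) =
      (p.gcd q).lcm ((q.gcd r).lcm (p.gcd r)) * p.gcd (q.gcd r) := by
  have hsurj : Function.Surjective (triangleQuotientHom p q r) :=
    (QuotientAddGroup.mk'_surjective _).comp
      (ZMod.intCast_surjective.prodMap ZMod.intCast_surjective)
  have E := (QuotientAddGroup.quotientAddEquivOfEq triangleLattice_eq_ker).trans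
    (QuotientAddGroup.quotientKerEquivOfSurjective _ hsurj)
  have hord : addOrderOf ((r : ZMod p), (r : ZMod q)) = (p / p.gcd r).lcm (q / q.gcd r) := by
    rw [Prod.addOrderOf, ZMod.addOrderOf_coe r hp, ZMod.addOrderOf_coe r hq]
  have : NeZero p := ⟨hp⟩
  have : NeZero q := ⟨hq⟩
  refine Nat.eq_of_mul_eq_mul_right (addOrderOf_pos ((r : ZMod p), (r : ZMod q))) ?_
  rw [Nat.card_congr E.toEquiv, ← AddSubgroup.index_eq_card, ← Nat.card_zmultiples,
    AddSubgroup.index_mul_card, Nat.card_prod, Nat.card_zmod, Nat.card_zmod, Nat.card_zmultiples,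
    hord, Nat.lcm_gcd_mul_gcd_mul_lcm_div_gcd hp hq hr]

end triangleLattice

theorem stmt_9 (p q r : ℕ) (hp : 0 < p) (hq : 0 < q) (hr : 0 < r) :
    Nonempty (((ℤ × ℤ) ⧸ AddSubgroup.closure
        {((p : ℤ), (0 : ℤ)), ((0 : ℤ), (q : ℤ)), ((r : ℤ), (r : ℤ))}) ≃+
      (ZMod (Nat.lcm (Nat.gcd p q) (Nat.lcm (Nat.gcd q r) (Nat.gcd p r))) ×
        ZMod (Nat.gcd p (Nat.gcd q r)))) := by
  have hcard := card_quotient_triangleLattice hp.ne' hq.ne' hr.ne'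
  have : Finite ((ℤ × ℤ) ⧸ triangleLattice p q r) :=
    Nat.finite_of_card_ne_zero (by simp [hcard, hp.ne', hq.ne', hr.ne'])
  exact (triangleLattice p q r).nonempty_quotient_addEquiv_zmod_prod
    (exponent_quotient_triangleLattice hp.ne' hq.ne' hr.ne') hcard
end

section
/- Let p, q, r ≥ 2 be integers, N = pqr/lcm(p,q,r), e1 = gcd(p,lcm(q,r)), e2 = gcd(q,lcm(p,r)), e3 = gcd(r,lcm(p,q)). It is impossible that N = e1 = e2 while e3 = r and N > 1. -/
theorem stmt_12 (p q r : ℕ) (hp : 2 ≤ p) (hq : 2 ≤ q) (hr : 2 ≤ r) :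
    ¬ (p * q * r / Nat.lcm p (Nat.lcm q r) = Nat.gcd p (Nat.lcm q r) ∧
       p * q * r / Nat.lcm p (Nat.lcm q r) = Nat.gcd q (Nat.lcm p r) ∧
       Nat.gcd r (Nat.lcm p q) = r ∧
       1 < p * q * r / Nat.lcm p (Nat.lcm q r)) := by
  rintro ⟨h1, h2, h3, _⟩
  have hrdvd : r ∣ Nat.lcm p q := by
    have := Nat.gcd_dvd_right r (Nat.lcm p q); rwa [h3] at this
  have hlcm : Nat.lcm p (Nat.lcm q r) = Nat.lcm p q := by
    rw [← Nat.lcm_assoc]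
    exact Nat.dvd_antisymm (Nat.lcm_dvd dvd_rfl hrdvd) (Nat.dvd_lcm_left _ _)
  have hlpos : 0 < Nat.lcm p q :=
    Nat.pos_of_ne_zero (Nat.lcm_ne_zero (by omega) (by omega))
  have hN : p * q * r / Nat.lcm p (Nat.lcm q r) = Nat.gcd p q * r := by
    rw [hlcm]
    have : p * q * r = Nat.gcd p q * r * Nat.lcm p q := by
      have h := Nat.gcd_mul_lcm p q; nlinarith [h]
    rw [this, Nat.mul_div_cancel _ hlpos]
  have hdp : Nat.gcd p q * r ∣ p := by
    rw [← hN, h1]; exact Nat.gcd_dvd_left _ _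
  have hdq : Nat.gcd p q * r ∣ q := by
    rw [← hN, h2]; exact Nat.gcd_dvd_left _ _
  have hdg : Nat.gcd p q * r ∣ Nat.gcd p q := Nat.dvd_gcd hdp hdq
  have hgpos : 0 < Nat.gcd p q := Nat.gcd_pos_of_pos_left q (by omega)
  have := Nat.le_of_dvd hgpos hdg
  nlinarith
end

section
/- Let e1, e2, e3 ≥ 1 be integers with 1/e1 + 1/e2 + 1/e3 > 1, such that the abelian group ℤ²/⟨(e1,0),(0,e2),(e3,e3)⟩ has order e1·e2·e3/lcm(e1,e2,e3) > 1 and the images of (1,0), (0,1), (1,1) have orders e1, e2, e3 respectively (i.e., the quotient is a smooth abelian quotient of Δ⁺(e1,e2,e3)). Then either (e1,e2,e3) = (2,2,2), or (e1,e2,e3) is a permutation of (1,k,k) for some integer k ≥ 2. -/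
lemma aux_two_two (a b : ℕ) (ha : 2 ≤ a) (hb : 2 ≤ b)
    (h : (6 : ℚ) / 7 < 1 / a + 1 / b) : a = 2 ∧ b = 2 := by
  by_contra hc
  have ha' : (1 : ℚ) / a ≤ 1 / 2 := by
    apply one_div_le_one_div_of_le (by norm_num)
    exact_mod_cast ha
  have hb' : (1 : ℚ) / b ≤ 1 / 2 := by
    apply one_div_le_one_div_of_le (by norm_num)
    exact_mod_cast hb
  rcases (by omega : 3 ≤ a ∨ 3 ≤ b) with h3 | h3
  · have : (1 : ℚ) / a ≤ 1 / 3 := by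
      apply one_div_le_one_div_of_le (by norm_num)
      exact_mod_cast h3
    linarith
  · have : (1 : ℚ) / b ≤ 1 / 3 := by
      apply one_div_le_one_div_of_le (by norm_num)
      exact_mod_cast h3
    linarith

lemma aux_le_six (a b c : ℕ) (ha : 2 ≤ a) (hb : 2 ≤ b) (hc : 2 ≤ c)
    (hd : a ∣ Nat.lcm b c) (hs : (1 : ℚ) < 1 / a + 1 / b + 1 / c) : a ≤ 6 := by
  by_contra h7
  push_neg at h7
  have ha' : (1 : ℚ) / a ≤ 1 / 7 := by
    apply one_div_le_one_div_of_le (by norm_num)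
    exact_mod_cast h7
  have : (6 : ℚ) / 7 < 1 / b + 1 / c := by linarith
  obtain ⟨hb2, hc2⟩ := aux_two_two b c hb hc this
  subst hb2; subst hc2
  have : a ∣ 2 := by simpa using hd
  have := Nat.le_of_dvd (by norm_num) this
  omega

theorem stmt_14 (e1 e2 e3 : ℕ) (h1 : 1 ≤ e1) (h2 : 1 ≤ e2) (h3 : 1 ≤ e3)
    (hsph : (1 : ℚ) / e1 + 1 / e2 + 1 / e3 > 1)
    (hcard : Nat.card ((ℤ × ℤ) ⧸ AddSubgroup.closure
        {((e1 : ℤ), (0 : ℤ)), ((0 : ℤ), (e2 : ℤ)), ((e3 : ℤ), (e3 : ℤ))}) =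
      e1 * e2 * e3 / Nat.lcm e1 (Nat.lcm e2 e3))
    (hgt : 1 < e1 * e2 * e3 / Nat.lcm e1 (Nat.lcm e2 e3))
    (ho1 : addOrderOf (QuotientAddGroup.mk ((1 : ℤ), (0 : ℤ)) :
        (ℤ × ℤ) ⧸ AddSubgroup.closure
          {((e1 : ℤ), (0 : ℤ)), ((0 : ℤ), (e2 : ℤ)), ((e3 : ℤ), (e3 : ℤ))}) = e1)
    (ho2 : addOrderOf (QuotientAddGroup.mk ((0 : ℤ), (1 : ℤ)) :
        (ℤ × ℤ) ⧸ AddSubgroup.closure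
          {((e1 : ℤ), (0 : ℤ)), ((0 : ℤ), (e2 : ℤ)), ((e3 : ℤ), (e3 : ℤ))}) = e2)
    (ho3 : addOrderOf (QuotientAddGroup.mk ((1 : ℤ), (1 : ℤ)) :
        (ℤ × ℤ) ⧸ AddSubgroup.closure
          {((e1 : ℤ), (0 : ℤ)), ((0 : ℤ), (e2 : ℤ)), ((e3 : ℤ), (e3 : ℤ))}) = e3) :
    (e1 = 2 ∧ e2 = 2 ∧ e3 = 2) ∨
      ∃ k : ℕ, 2 ≤ k ∧
        ((e1, e2, e3) = (1, k, k) ∨ (e1, e2, e3) = (k, 1, k) ∨ (e1, e2, e3) = (k, k, 1)) := by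
  set G := (ℤ × ℤ) ⧸ AddSubgroup.closure
      {((e1 : ℤ), (0 : ℤ)), ((0 : ℤ), (e2 : ℤ)), ((e3 : ℤ), (e3 : ℤ))} with hG
  set a : G := QuotientAddGroup.mk ((1 : ℤ), (0 : ℤ)) with haa
  set b : G := QuotientAddGroup.mk ((0 : ℤ), (1 : ℤ)) with hbb
  have hab : (QuotientAddGroup.mk ((1 : ℤ), (1 : ℤ)) : G) = a + b := by
    rw [haa, hbb, ← QuotientAddGroup.mk_add]
    norm_num
  have k3 := (AddCommute.all a b).addOrderOf_add_dvd_lcm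
  rw [← hab, ho3, ho1, ho2] at k3
  have hd3 : e3 ∣ Nat.lcm e1 e2 := k3
  have k1 := (AddCommute.all (a + b) (-b)).addOrderOf_add_dvd_lcm
  rw [addOrderOf_neg] at k1
  have e1eq : a + b + -b = a := by abel
  rw [e1eq, ← hab, ho1, ho2, ho3] at k1
  have hd1 : e1 ∣ Nat.lcm e3 e2 := k1
  have k2 := (AddCommute.all (a + b) (-a)).addOrderOf_add_dvd_lcm
  rw [addOrderOf_neg] at k2
  have e2eq : a + b + -a = b := by abel
  rw [e2eq, ← hab, ho1, ho2, ho3] at k2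
  have hd2 : e2 ∣ Nat.lcm e3 e1 := k2
  clear k1 k2 k3 e1eq e2eq
  clear hcard ho1 ho2 ho3 hab haa hbb hG
  rcases (by omega : e1 = 1 ∨ 2 ≤ e1) with he1 | he1
  · subst he1
    have h23 : e2 ∣ e3 := by simpa using hd2
    have h32 : e3 ∣ e2 := by simpa using hd3
    have he : e2 = e3 := Nat.dvd_antisymm h23 h32
    subst he
    rw [Nat.lcm_self, Nat.lcm_one_left, one_mul, Nat.mul_div_cancel _ (by omega)] at hgt
    exact Or.inr ⟨e2, hgt, Or.inl rfl⟩
  rcases (by omega : e2 = 1 ∨ 2 ≤ e2) with he2 | he2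
  · subst he2
    have h13 : e1 ∣ e3 := by simpa using hd1
    have h31 : e3 ∣ e1 := by simpa using hd3
    have he : e1 = e3 := Nat.dvd_antisymm h13 h31
    subst he
    rw [Nat.lcm_one_left, Nat.lcm_self, mul_one, Nat.mul_div_cancel _ (by omega)] at hgt
    exact Or.inr ⟨e1, hgt, Or.inr (Or.inl rfl)⟩
  rcases (by omega : e3 = 1 ∨ 2 ≤ e3) with he3 | he3
  · subst he3
    have h12 : e1 ∣ e2 := by simpa using hd1
    have h21 : e2 ∣ e1 := by simpa using hd2
    have he : e1 = e2 := Nat.dvd_antisymm h12 h21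
    subst he
    rw [Nat.lcm_one_right, Nat.lcm_self, mul_one, Nat.mul_div_cancel _ (by omega)] at hgt
    exact Or.inr ⟨e1, hgt, Or.inr (Or.inr rfl)⟩
  -- all ≥ 2
  have hb1 : e1 ≤ 6 := aux_le_six e1 e2 e3 he1 he2 he3
    (by rwa [Nat.lcm_comm] at hd1) (by linarith)
  have hb2 : e2 ≤ 6 := aux_le_six e2 e3 e1 he2 he3 he1 hd2 (by push_cast; linarith)
  have hb3 : e3 ≤ 6 := aux_le_six e3 e1 e2 he3 he1 he2 hd3 (by push_cast; linarith)
  clear hgt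
  interval_cases e1 <;> interval_cases e2 <;> interval_cases e3 <;>
    first
      | (left; exact ⟨rfl, rfl, rfl⟩)
      | (exfalso; revert hd1 hd2 hd3; decide)
      | (exfalso; revert hsph; norm_num)
end

section
/- Let n ≥ 1 and r ≥ 2 be integers satisfying r^(n-2)·(2r - n·r + n) = 2. Then either n = 2, or (n = 3 and r = 2). -/
theorem stmt_15 (n r : ℕ) (hn : 1 ≤ n) (hr : 2 ≤ r)
    (heq : (r : ℤ) ^ (n - 2) * (2 * r - n * r + n) = 2) :
    n = 2 ∨ (n = 3 ∧ r = 2) := by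
  have hr' : (2 : ℤ) ≤ (r : ℤ) := by exact_mod_cast hr
  have hdvd : (r : ℤ) ^ (n - 2) ∣ 2 := ⟨_, heq.symm⟩
  have hle : (r : ℤ) ^ (n - 2) ≤ 2 := Int.le_of_dvd (by norm_num) hdvd
  have h2 : (2 : ℤ) ^ (n - 2) ≤ 2 := le_trans (pow_le_pow_left₀ (by norm_num) hr' _) hle
  have hk : n - 2 ≤ 1 := by
    by_contra h
    push_neg at h
    have : (2:ℤ)^2 ≤ (2:ℤ)^(n-2) := pow_le_pow_right₀ (by norm_num) (by omega)
    linarith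
  have hn3 : n ≤ 3 := by omega
  interval_cases n
  · simp at heq; omega
  · left; rfl
  · right
    refine ⟨rfl, ?_⟩
    simp at heq
    have hr3 : (r : ℤ) ≤ 2 := by nlinarith
    have : (r : ℤ) = 2 := le_antisymm hr3 hr'
    exact_mod_cast this
end
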